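/- arXiv:0903.4218 — 4 statements merged into one kernel-verified Lean document; each statement's English description precedes it below -/
import Mathlib

section
/- For every nonzero $t \in \mathbb{F}_q$ and $E \subseteq \mathbb{F}_q^2$, the sum $\sum_{m \in S_t} |\widehat{E}(m)|^2$ is at most $\sqrt{3}\,|E|^{3/2} q^{-3}$, where $S_t = \{x \in \mathbb{F}_q^2 : x_1^2 + x_2^2 = t\}$. -/
/-!
Write `A m = ∑_{x ∈ E} χ(-x·m)` and `T = ∑_{m ∈ S_t} |A m|²`. Expanding `|A m|² = A m · conj (A m)`
gives `T = ∑_{x ∈ E} G x` with `G x = ∑_{m ∈ S_t} A m χ(x·m)`, so by Hölder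
`T⁴ ≤ |E|³ ∑_x |G x|⁴`. Since `G x ^ 2` is the Fourier series of the self-convolution `c` of
`A · 1_{S_t}`, Plancherel turns `∑_x |G x|⁴` into `q² ∑_s |c s|²`. Here `c 0 = T`, because `S_t` is
symmetric and `A (-m) = conj (A m)`; and for `s ≠ 0` the points `m ∈ S_t` with `s - m ∈ S_t` lie on
the line `2 s·m = ‖s‖`, which meets the circle at most twice, so Cauchy–Schwarz gives
`∑_{s ≠ 0} |c s|² ≤ 2 T²`. Altogether `T² ≤ 3 |E|³ q²`.
-/

open Finset

lemma AddChar.map_sum_eq_prod {A M ι : Type*} [AddCommMonoid A] [CommMonoid M] (ψ : AddChar A M)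
    (s : Finset ι) (f : ι → A) : ψ (∑ i ∈ s, f i) = ∏ i ∈ s, ψ (f i) :=
  map_prod ψ.toMonoidHom (fun i => Multiplicative.ofAdd (f i)) s

variable {F : Type*} [Field F] [Fintype F] [DecidableEq F]

section Orthogonality

variable {ι : Type*} [Fintype ι] [DecidableEq ι] {χ : AddChar F ℂ}

lemma AddChar.sum_apply_dotProduct (hχ : χ ≠ 1) (s : ι → F) :
    ∑ x : ι → F, χ (x ⬝ᵥ s) = if s = 0 then (Fintype.card F : ℂ) ^ Fintype.card ι else 0 := by
  have hprod : ∑ x : ι → F, χ (x ⬝ᵥ s) = ∏ i, ∑ a : F, χ (a * s i) := by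
    simp only [Fintype.prod_sum, dotProduct, χ.map_sum_eq_prod]
  simp only [hprod, AddChar.sum_mulShift _ (AddChar.IsPrimitive.of_ne_one hχ), Nat.cast_ite,
    Nat.cast_zero, prod_ite_zero, prod_const, card_univ, mem_univ, true_implies, funext_iff,
    Pi.zero_apply]

lemma AddChar.sum_normSq_sum_mul_apply_dotProduct (hχ : χ ≠ 1) (c : (ι → F) → ℂ) :
    ∑ x : ι → F, Complex.normSq (∑ s, c s * χ (x ⬝ᵥ s)) =
      (Fintype.card F : ℝ) ^ Fintype.card ι * ∑ s, Complex.normSq (c s) := by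
  have hexpand : ∀ x : ι → F, (∑ s, c s * χ (x ⬝ᵥ s)) * starRingEnd ℂ (∑ s, c s * χ (x ⬝ᵥ s)) =
      ∑ s, ∑ s', c s * starRingEnd ℂ (c s') * χ (x ⬝ᵥ (s - s')) := by
    intro x
    simp only [map_sum, map_mul, ← AddChar.map_neg_eq_conj, sum_mul_sum]
    refine sum_congr rfl fun s _ => sum_congr rfl fun s' _ => ?_
    rw [dotProduct_sub, sub_eq_add_neg, χ.map_add_eq_mul]
    ring
  have horth : ∀ s s' : ι → F, ∑ x : ι → F, c s * starRingEnd ℂ (c s') * χ (x ⬝ᵥ (s - s')) =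
      if s = s' then (Fintype.card F : ℂ) ^ Fintype.card ι * (c s * starRingEnd ℂ (c s))
      else 0 := by
    intro s s'
    rw [← mul_sum, AddChar.sum_apply_dotProduct hχ]
    by_cases h : s = s'
    · simp only [h, sub_self, if_true]; ring
    · simp only [sub_eq_zero, h, if_false, mul_zero]
  apply Complex.ofReal_injective
  push_cast
  simp only [← Complex.mul_conj, hexpand]
  rw [sum_comm, mul_sum]
  refine sum_congr rfl fun s _ => ?_
  rw [sum_comm, sum_congr rfl fun s' _ => horth s s', sum_ite_eq univ s, if_pos (mem_univ s)]

end Orthogonality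

section SelfConvolution

variable {V : Type*} [AddCommGroup V] [DecidableEq V] (S : Finset V)

def sumPairs (s : V) : Finset (V × V) := (S ×ˢ S).filter fun p => p.1 + p.2 = s

def selfConv (a : V → ℂ) (s : V) : ℂ := ∑ p ∈ sumPairs S s, a p.1 * a p.2

variable {S}

lemma mem_sumPairs {s : V} {p : V × V} :
    p ∈ sumPairs S s ↔ p.1 ∈ S ∧ p.2 ∈ S ∧ p.1 + p.2 = s := by
  simp [sumPairs, and_assoc]

lemma card_sumPairs (s : V) : #(sumPairs S s) = #(S.filter fun m => s - m ∈ S) := by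
  refine card_nbij' Prod.fst (fun m => (m, s - m)) ?_ ?_ ?_ ?_
  · intro p hp
    obtain ⟨h1, h2, rfl⟩ := mem_sumPairs.1 hp
    simpa using And.intro h1 h2
  · intro m hm
    obtain ⟨h1, h2⟩ := mem_filter.1 hm
    exact mem_sumPairs.2 ⟨h1, h2, add_sub_cancel m s⟩
  · intro p hp
    obtain ⟨-, -, rfl⟩ := mem_sumPairs.1 hp
    simp
  · intro m _
    rfl

variable (S)

lemma sum_sum_sumPairs [Fintype V] {M : Type*} [AddCommMonoid M] (f : V × V → M) :
    ∑ s, ∑ p ∈ sumPairs S s, f p = ∑ p ∈ S ×ˢ S, f p :=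
  sum_fiberwise _ _ f

lemma sq_sum_mul_addChar [Fintype V] (a : V → ℂ) (ψ : AddChar V ℂ) :
    (∑ m ∈ S, a m * ψ m) ^ 2 = ∑ s, selfConv S a s * ψ s := by
  have hψ : ∀ s, ∑ p ∈ sumPairs S s, a p.1 * a p.2 * ψ s =
      ∑ p ∈ sumPairs S s, a p.1 * ψ p.1 * (a p.2 * ψ p.2) := fun s =>
    sum_congr rfl fun p hp => by
      rw [← (mem_sumPairs.1 hp).2.2, ψ.map_add_eq_mul]
      ring
  simp only [selfConv, sum_mul, hψ, sum_sum_sumPairs, sum_product]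
  rw [sq, sum_mul_sum]

lemma selfConv_zero (hS : ∀ m ∈ S, -m ∈ S) {a : V → ℂ} (ha : ∀ m, a (-m) = starRingEnd ℂ (a m)) :
    selfConv S a 0 = ∑ m ∈ S, Complex.normSq (a m) := by
  rw [Complex.ofReal_sum]
  refine sum_nbij' Prod.fst (fun m => (m, -m)) ?_ ?_ ?_ ?_ ?_
  · exact fun p hp => (mem_sumPairs.1 hp).1
  · exact fun m hm => mem_sumPairs.2 ⟨hm, hS m hm, add_neg_cancel m⟩
  · exact fun p hp => Prod.ext rfl (eq_neg_of_add_eq_zero_right (mem_sumPairs.1 hp).2.2).symm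
  · exact fun m _ => rfl
  · intro p hp
    rw [eq_neg_of_add_eq_zero_right (mem_sumPairs.1 hp).2.2, ha, Complex.mul_conj]

lemma normSq_selfConv_le (a : V → ℂ) (s : V) :
    Complex.normSq (selfConv S a s) ≤
      #(sumPairs S s) * ∑ p ∈ sumPairs S s, Complex.normSq (a p.1) * Complex.normSq (a p.2) := by
  simp only [← Complex.sq_norm, ← mul_pow, ← norm_mul]
  calc ‖selfConv S a s‖ ^ 2 ≤ (∑ p ∈ sumPairs S s, ‖a p.1 * a p.2‖) ^ 2 := by
        gcongr
        exact norm_sum_le _ _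
    _ ≤ _ := sq_sum_le_card_mul_sum_sq

lemma sum_normSq_selfConv_le [Fintype V] {k : ℕ} (hk : ∀ s ≠ 0, #(sumPairs S s) ≤ k)
    (hS : ∀ m ∈ S, -m ∈ S) {a : V → ℂ} (ha : ∀ m, a (-m) = starRingEnd ℂ (a m)) :
    ∑ s, Complex.normSq (selfConv S a s) ≤ (1 + k) * (∑ m ∈ S, Complex.normSq (a m)) ^ 2 := by
  set T := ∑ m ∈ S, Complex.normSq (a m) with hT
  have hterm : ∀ s, Complex.normSq (selfConv S a s) ≤ (if s = 0 then T ^ 2 else 0) +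
      k * ∑ p ∈ sumPairs S s, Complex.normSq (a p.1) * Complex.normSq (a p.2) := by
    intro s
    have hnonneg : 0 ≤ ∑ p ∈ sumPairs S s, Complex.normSq (a p.1) * Complex.normSq (a p.2) :=
      sum_nonneg fun p _ => mul_nonneg (Complex.normSq_nonneg _) (Complex.normSq_nonneg _)
    rcases eq_or_ne s 0 with rfl | hs
    · rw [if_pos rfl, selfConv_zero S hS ha, Complex.normSq_ofReal, sq]
      exact le_add_of_nonneg_right (mul_nonneg k.cast_nonneg hnonneg)
    · rw [if_neg hs, zero_add]
      exact (normSq_selfConv_le S a s).trans (by gcongr; exact_mod_cast hk s hs)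
  calc ∑ s, Complex.normSq (selfConv S a s)
      ≤ ∑ s, ((if s = 0 then T ^ 2 else 0) +
          k * ∑ p ∈ sumPairs S s, Complex.normSq (a p.1) * Complex.normSq (a p.2)) :=
        sum_le_sum fun s _ => hterm s
    _ = T ^ 2 + k * T ^ 2 := by
        rw [sum_add_distrib, sum_ite_eq' univ (0 : V), if_pos (mem_univ _), ← mul_sum,
          sum_sum_sumPairs, sum_product]
        dsimp only
        rw [← sum_mul_sum, ← hT, sq]
    _ = (1 + k) * T ^ 2 := by ring

end SelfConvolution

lemma Polynomial.card_nthRootsFinset_le {R : Type*} [CommRing R] [IsDomain R] (n : ℕ) (a : R) :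
    #(nthRootsFinset n a) ≤ n := by
  classical
  rw [nthRootsFinset_def]
  exact (Multiset.toFinset_card_le _).trans (card_nthRoots n a)

section Sphere

variable (ι : Type*) [Fintype ι] [DecidableEq ι]

def quadSphere (t : F) : Finset (ι → F) := univ.filter fun m => ∑ i, m i ^ 2 = t

variable {ι}

lemma neg_mem_quadSphere {t : F} {m : ι → F} (hm : m ∈ quadSphere ι t) : -m ∈ quadSphere ι t := by
  simpa [quadSphere] using hm

lemma mem_quadSphere_fin_two {t : F} {m : Fin 2 → F} :
    m ∈ quadSphere (Fin 2) t ↔ m 0 ^ 2 + m 1 ^ 2 = t := by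
  simp [quadSphere, Fin.sum_univ_two]

theorem card_filter_sub_mem_quadSphere_le_two (hchar : ringChar F ≠ 2) {t : F} (ht : t ≠ 0)
    {s : Fin 2 → F} (hs : s ≠ 0) :
    #((quadSphere (Fin 2) t).filter fun m => s - m ∈ quadSphere (Fin 2) t) ≤ 2 := by
  set P := (quadSphere (Fin 2) t).filter fun m => s - m ∈ quadSphere (Fin 2) t
  set N := s 0 ^ 2 + s 1 ^ 2
  set cross : (Fin 2 → F) → F := fun m => s 0 * m 1 - s 1 * m 0
  have h2 : (2 : F) ≠ 0 := Ring.two_ne_zero hchar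
  have hP : ∀ m ∈ P, m 0 ^ 2 + m 1 ^ 2 = t ∧ s 0 * m 0 + s 1 * m 1 = N / 2 := by
    intro m hm
    obtain ⟨hm, hsm⟩ := mem_filter.1 hm
    rw [mem_quadSphere_fin_two] at hm hsm
    simp only [Pi.sub_apply] at hsm
    refine ⟨hm, ?_⟩
    field_simp
    linear_combination hm - hsm
  -- Lagrange's identity `(s⬝m)² + (s×m)² = ‖s‖ ‖m‖`
  have hcross : ∀ m ∈ P, cross m ^ 2 = N * t - (N / 2) ^ 2 := by
    intro m hm
    obtain ⟨hmt, hdot⟩ := hP m hm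
    linear_combination N * hmt - (s 0 * m 0 + s 1 * m 1 + N / 2) * hdot
  rcases eq_or_ne N 0 with hN | hN
  · -- a point of `P` would satisfy `s × m = 0`, i.e. `m ∥ s`, so `t = ‖m‖ = 0`
    suffices P = ∅ by simp [this]
    refine eq_empty_of_forall_notMem fun m hm => hs ?_
    obtain ⟨hmt, -⟩ := hP m hm
    have hc : s 0 * m 1 - s 1 * m 0 = 0 :=
      pow_eq_zero_iff two_ne_zero |>.1 (by rw [hcross m hm, hN]; ring)
    have h0 : s 0 ^ 2 * t = 0 := by
      linear_combination (-s 0 ^ 2) * hmt + (s 0 * m 1 + s 1 * m 0) * hc + m 0 ^ 2 * hN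
    have h1 : s 1 ^ 2 * t = 0 := by
      linear_combination (-s 1 ^ 2) * hmt - (s 0 * m 1 + s 1 * m 0) * hc + m 1 ^ 2 * hN
    ext i
    fin_cases i
    exacts [pow_eq_zero_iff two_ne_zero |>.1 ((mul_eq_zero.1 h0).resolve_right ht),
      pow_eq_zero_iff two_ne_zero |>.1 ((mul_eq_zero.1 h1).resolve_right ht)]
  · refine (card_le_card_of_injOn cross (fun m hm => ?_) fun m hm m' hm' hmm' => ?_).trans
      (Polynomial.card_nthRootsFinset_le 2 (N * t - (N / 2) ^ 2))
    · exact (Polynomial.mem_nthRootsFinset two_pos _).2 (hcross m hm)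
    · obtain ⟨-, hdot⟩ := hP m hm
      obtain ⟨-, hdot'⟩ := hP m' hm'
      simp only [cross] at hmm'
      have h0 : m 0 = m' 0 :=
        mul_left_cancel₀ hN (by linear_combination s 0 * (hdot - hdot') - s 1 * hmm')
      have h1 : m 1 = m' 1 :=
        mul_left_cancel₀ hN (by linear_combination s 1 * (hdot - hdot') + s 0 * hmm')
      ext i
      fin_cases i
      exacts [h0, h1]

end Sphere

section Restriction

variable {ι : Type*} [Fintype ι] [DecidableEq ι] {χ : AddChar F ℂ}

theorem sq_sum_normSq_sum_addChar_le (hχ : χ ≠ 1) (E : Finset (ι → F)) {S : Finset (ι → F)}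
    (hS : ∀ m ∈ S, -m ∈ S) {k : ℕ} (hk : ∀ s ≠ 0, #(sumPairs S s) ≤ k) :
    (∑ m ∈ S, Complex.normSq (∑ x ∈ E, χ (-(x ⬝ᵥ m)))) ^ 2 ≤
      (1 + k) * #E ^ 3 * (Fintype.card F : ℝ) ^ Fintype.card ι := by
  set A : (ι → F) → ℂ := fun m => ∑ x ∈ E, χ (-(x ⬝ᵥ m)) with hA
  set T := ∑ m ∈ S, Complex.normSq (A m) with hT
  set G : (ι → F) → ℂ := fun x => ∑ m ∈ S, A m * χ (x ⬝ᵥ m) with hG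
  have hA_neg : ∀ m, A (-m) = starRingEnd ℂ (A m) := fun m => by
    simp only [hA, map_sum, dotProduct_neg, AddChar.map_neg_eq_conj, Complex.conj_conj]
  have hT_eq : (T : ℂ) = ∑ x ∈ E, G x := by
    have hconj : ∀ m, starRingEnd ℂ (A m) = ∑ x ∈ E, χ (x ⬝ᵥ m) := fun m => by
      rw [← hA_neg]; simp only [hA, dotProduct_neg, neg_neg]
    simp only [hT, Complex.ofReal_sum, ← Complex.mul_conj, hconj, hG, mul_sum]
    exact sum_comm
  have hT0 : 0 ≤ T := sum_nonneg fun m _ => Complex.normSq_nonneg _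
  have hT_le : T ≤ ∑ x ∈ E, ‖G x‖ := by
    calc T = ‖(T : ℂ)‖ := (Complex.norm_of_nonneg hT0).symm
      _ ≤ ∑ x ∈ E, ‖G x‖ := hT_eq ▸ norm_sum_le _ _
  have hG4 : ∑ x, ‖G x‖ ^ 4 = (Fintype.card F : ℝ) ^ Fintype.card ι *
      ∑ s, Complex.normSq (selfConv S A s) := by
    have hsq : ∀ x, G x ^ 2 = ∑ s, selfConv S A s * χ (x ⬝ᵥ s) := fun x =>
      sq_sum_mul_addChar S A (χ.compAddMonoidHom (AddMonoidHom.mk' (x ⬝ᵥ ·) (dotProduct_add x)))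
    have h4 : ∀ x, ‖G x‖ ^ 4 = Complex.normSq (G x ^ 2) := fun x => by
      rw [← Complex.sq_norm, norm_pow]; ring
    simp only [h4, hsq, AddChar.sum_normSq_sum_mul_apply_dotProduct hχ]
  have hT4 : T ^ 2 * T ^ 2 ≤ ((1 + k) * #E ^ 3 * (Fintype.card F : ℝ) ^ Fintype.card ι) * T ^ 2 :=
    calc T ^ 2 * T ^ 2 = T ^ (3 + 1) := by ring
      _ ≤ (∑ x ∈ E, ‖G x‖) ^ (3 + 1) := by gcongr
      _ ≤ #E ^ 3 * ∑ x ∈ E, ‖G x‖ ^ (3 + 1) :=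
        pow_sum_le_card_mul_sum_pow (fun x _ => norm_nonneg _) 3
      _ ≤ #E ^ 3 * ∑ x, ‖G x‖ ^ 4 := by
        gcongr
        exact subset_univ E
      _ ≤ #E ^ 3 * ((Fintype.card F : ℝ) ^ Fintype.card ι * ((1 + k) * T ^ 2)) := by
        rw [hG4]
        gcongr
        exact sum_normSq_selfConv_le S hk hS hA_neg
      _ = _ := by ring
  rcases (sq_nonneg T).eq_or_lt with hT2 | hT2
  · rw [← hT2]; positivity
  · exact le_of_mul_le_mul_right hT4 hT2

end Restriction

/-- For every nonzero `t` and `E ⊆ 𝔽_q²`, the sum over the circle `S_t` of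
`|Ê(m)|²` is at most `√3 |E|^{3/2} q^{-3}`, where
`Ê(m) = q^{-2} ∑_{x ∈ E} χ(-x·m)` for a nontrivial additive character `χ`. -/
theorem stmt_0 (F : Type) [Field F] [Fintype F] [DecidableEq F]
    (hchar : ringChar F ≠ 2)
    (χ : AddChar F ℂ) (hχ : χ ≠ 1)
    (E : Finset (Fin 2 → F)) (t : F) (ht : t ≠ 0) :
    ∑ m ∈ Finset.univ.filter (fun m : Fin 2 → F => ∑ i, m i ^ 2 = t),
        ‖(Fintype.card F : ℂ)⁻¹ ^ 2 * ∑ x ∈ E, χ (-(∑ i, x i * m i))‖ ^ 2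
      ≤ Real.sqrt 3 * (E.card : ℝ) ^ ((3 : ℝ) / 2) / (Fintype.card F : ℝ) ^ 3 := by
  change ∑ m ∈ quadSphere (Fin 2) t, ‖(Fintype.card F : ℂ)⁻¹ ^ 2 * ∑ x ∈ E, χ (-(x ⬝ᵥ m))‖ ^ 2 ≤ _
  set T := ∑ m ∈ quadSphere (Fin 2) t, Complex.normSq (∑ x ∈ E, χ (-(x ⬝ᵥ m)))
  have hq : 0 < (Fintype.card F : ℝ) := Nat.cast_pos.2 Fintype.card_pos
  have hT_sq : T ^ 2 ≤ (√3 * #E ^ ((3 : ℝ) / 2) * Fintype.card F) ^ 2 := by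
    have hk : ∀ s ≠ 0, #(sumPairs (quadSphere (Fin 2) t) s) ≤ 2 := fun s hs =>
      (card_sumPairs s).trans_le (card_filter_sub_mem_quadSphere_le_two hchar ht hs)
    calc T ^ 2 ≤ (1 + (2 : ℕ)) * #E ^ 3 * (Fintype.card F : ℝ) ^ Fintype.card (Fin 2) :=
          sq_sum_normSq_sum_addChar_le hχ E (fun _ => neg_mem_quadSphere) hk
      _ = _ := by
          rw [mul_pow, mul_pow, Real.sq_sqrt zero_le_three,
            ← Real.rpow_mul_natCast (Nat.cast_nonneg _)]
          norm_num
  have hT_le : T ≤ √3 * #E ^ ((3 : ℝ) / 2) * Fintype.card F :=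
    (le_abs_self T).trans (abs_le_of_sq_le_sq hT_sq (by positivity))
  calc _ = T / (Fintype.card F : ℝ) ^ 4 := by
        simp only [norm_mul, norm_pow, norm_inv, Complex.norm_natCast, mul_pow, Complex.sq_norm,
          ← mul_sum, T]
        field_simp
    _ ≤ √3 * #E ^ ((3 : ℝ) / 2) * Fintype.card F / (Fintype.card F : ℝ) ^ 4 := by gcongr
    _ = _ := by field_simp
end

section
/- Let $E \subseteq \mathbb{F}_q^d$ with $|E| \geq q^{(d+1)/2}$. Then there exists a subset $E' \subseteq E$ with $|E'| \gtrsim |E|$ such that for every $y \in E'$ the pinned dot product set $\Pi_y(E) = \{x \cdot y : x \in E\}$ satisfies $|\Pi_y(E)| > q/2$. -/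
/-!
Let `ν(y) = dotCollisions E y` count the pairs `(x, x') ∈ E²` with `x ⬝ y = x' ⬝ y`. By Cauchy–Schwarz
`|E|² ≤ |Π_y(E)| ν(y)`, so a bad pin `y` (one with `|Π_y(E)| ≤ q/2`) is a heavy direction:
`q ν(y) ≥ 2|E|²`. Summing `ν` over all `y` counts, for each pair, the hyperplane orthogonal to
`x - x'`; with `|E|² ≥ q^(d+1)` Markov's inequality leaves at most `(1 - 1/q)|E|` bad pins,
which settles `q ≤ 16`.

For larger `q` split the bad pins by the number of points of `E` on the punctured line through
them. Heaviness is invariant under scaling, so each pin whose line carries at most `q/2` points of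
`E` contributes `q - 1` heavy directions, each shared by at most `q/2` such pins: there are at most
`|E|/2` of them. A bad pin `y` is orthogonal to every line carrying more than `q/2` points of `E`,
since otherwise `x ↦ x ⬝ y` would be injective on that line. So the remaining bad pins are pairwise
orthogonal, span a totally isotropic subspace, and number at most `q^(d/2) ≤ |E|/4`.
-/

open Finset Matrix

section

variable {F ι : Type*} [Field F] [Fintype ι]

local notation "q" => Fintype.card F

lemma card_sq_le_of_isotropic [Fintype F] {S : Finset (ι → F)}
    (hS : ∀ x ∈ S, ∀ y ∈ S, x ⬝ᵥ y = 0) : #S ^ 2 ≤ q ^ Fintype.card ι := by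
  set B : LinearMap.BilinForm F (ι → F) := dotProductBilin F F
  set W := Submodule.span F (S : Set (ι → F))
  have hW : W ≤ B.orthogonal W := by
    refine Submodule.span_le.mpr fun y hy => ?_
    rw [SetLike.mem_coe, LinearMap.BilinForm.mem_orthogonal_iff]
    intro x hx
    induction hx using Submodule.span_induction with
    | mem x hx => exact (dotProduct_comm x y).trans (hS y hy x hx)
    | zero => simp
    | add x z _ _ hx hz => simp_all [B]
    | smul c x _ hx => simp_all [B]
  have hker : LinearMap.ker B = ⊥ := by
    ext x
    simp [B, LinearMap.ext_iff, dotProduct_eq_zero_iff]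
  have hdim := B.finrank_add_finrank_orthogonal' W
  rw [hker, inf_bot_eq, finrank_bot, Module.finrank_pi] at hdim
  have hW2 : 2 * Module.finrank F W ≤ Fintype.card ι := by
    have := Submodule.finrank_mono hW
    omega
  have hSW : #S ≤ Nat.card W := by
    rw [← Set.ncard_coe_finset]
    exact (Set.ncard_le_ncard Submodule.subset_span (Set.toFinite _)).trans_eq
      (Nat.card_coe_set_eq _).symm
  calc #S ^ 2 ≤ Nat.card W ^ 2 := Nat.pow_le_pow_left hSW 2
    _ = q ^ (2 * Module.finrank F W) := by
      rw [Module.natCard_eq_pow_finrank (K := F), Nat.card_eq_fintype_card, ← pow_mul, mul_comm]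
    _ ≤ q ^ Fintype.card ι := Nat.pow_le_pow_right Fintype.card_pos hW2

variable [DecidableEq F]

def dotCollisions (E : Finset (ι → F)) (y : ι → F) : ℕ := #{p ∈ E ×ˢ E | p.1 ⬝ᵥ y = p.2 ⬝ᵥ y}

variable {E : Finset (ι → F)}

lemma dotCollisions_eq_sum_sq {y : ι → F} {s : Finset F} (hs : ∀ x ∈ E, x ⬝ᵥ y ∈ s) :
    dotCollisions E y = ∑ t ∈ s, #{x ∈ E | x ⬝ᵥ y = t} ^ 2 := by
  rw [dotCollisions, card_eq_sum_card_fiberwise (f := fun p => p.1 ⬝ᵥ y)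
    fun p hp => hs _ (mem_product.1 (mem_filter.1 hp).1).1]
  refine sum_congr rfl fun t _ => ?_
  rw [sq, ← card_product]
  congr 1
  ext ⟨a, b⟩
  simp only [mem_filter, mem_product]
  grind

lemma sq_card_le_card_mul_dotCollisions {y : ι → F} {s : Finset F}
    (hs : ∀ x ∈ E, x ⬝ᵥ y ∈ s) : #E ^ 2 ≤ #s * dotCollisions E y := by
  rw [card_eq_sum_card_fiberwise hs, dotCollisions_eq_sum_sq hs]
  exact sq_sum_le_card_mul_sum_sq

variable (E) in
lemma dotCollisions_zero : dotCollisions E 0 = #E ^ 2 := by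
  simp [dotCollisions, sq]

variable (E) in
lemma dotCollisions_units_smul (u : Fˣ) (y : ι → F) :
    dotCollisions E (u • y) = dotCollisions E y := by
  simp [dotCollisions, Units.smul_def, dotProduct_smul]

variable [Fintype F]

def nonzeroMultiples (y : ι → F) : Finset (ι → F) := univ.image fun u : Fˣ => u • y

lemma mem_nonzeroMultiples {y z : ι → F} : z ∈ nonzeroMultiples y ↔ ∃ u : Fˣ, u • y = z := by
  simp [nonzeroMultiples]

lemma card_nonzeroMultiples {y : ι → F} (hy : y ≠ 0) : #(nonzeroMultiples y) = q - 1 := by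
  rw [nonzeroMultiples, card_image_of_injective, card_univ, Fintype.card_units]
  intro u v huv
  exact Units.ext (smul_left_injective F hy huv)

lemma card_inter_nonzeroMultiples_le_card_image {y y' : ι → F} (h : y' ⬝ᵥ y ≠ 0) :
    #(E ∩ nonzeroMultiples y') ≤ #(E.image (· ⬝ᵥ y)) := by
  refine card_le_card_of_injOn (· ⬝ᵥ y) (fun x hx => mem_image_of_mem _ (mem_inter.1 hx).1) ?_
  intro a ha b hb hab
  obtain ⟨u, rfl⟩ := mem_nonzeroMultiples.1 (mem_inter.1 ha).2
  obtain ⟨v, rfl⟩ := mem_nonzeroMultiples.1 (mem_inter.1 hb).2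
  simp only [Units.smul_def, smul_dotProduct, smul_eq_mul] at hab
  rw [Units.ext (mul_right_cancel₀ h hab)]

lemma two_mul_sq_card_le_of_two_mul_card_image_le {y : ι → F}
    (h : 2 * #(E.image (· ⬝ᵥ y)) ≤ q) : 2 * #E ^ 2 ≤ q * dotCollisions E y :=
  calc 2 * #E ^ 2 ≤ 2 * (#(E.image (· ⬝ᵥ y)) * dotCollisions E y) :=
        Nat.mul_le_mul_left 2 (sq_card_le_card_mul_dotCollisions fun _ hx => mem_image_of_mem _ hx)
    _ ≤ q * dotCollisions E y := by
        rw [← mul_assoc]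
        exact Nat.mul_le_mul_right _ h

variable (E) in
def badPins : Finset (ι → F) := {y ∈ E | 2 * #(E.image (· ⬝ᵥ y)) ≤ q}

lemma dotProduct_eq_zero_of_mem_badPins {y y' : ι → F} (hy : y ∈ badPins E)
    (hy' : q < 2 * #(E ∩ nonzeroMultiples y')) : y' ⬝ᵥ y = 0 := by
  by_contra h
  have := card_inter_nonzeroMultiples_le_card_image (E := E) h
  have := (mem_filter.1 hy).2
  omega

variable [DecidableEq ι]

lemma card_filter_dotProduct_eq_zero_mul_card {z : ι → F} (hz : z ≠ 0) :
    #{y | z ⬝ᵥ y = 0} * q = q ^ Fintype.card ι := by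
  set f : Module.Dual F (ι → F) := dotProductBilin F F z
  have hf : f ≠ 0 := fun h => hz <| dotProduct_eq_zero_iff.mp fun y => LinearMap.congr_fun h y
  have hdim := Module.Dual.finrank_ker_add_one_of_ne_zero hf
  rw [Module.finrank_pi] at hdim
  have hker : #{y | z ⬝ᵥ y = 0} = Nat.card (LinearMap.ker f) := by
    rw [← Fintype.card_subtype, ← Nat.card_eq_fintype_card]
    rfl
  rw [hker, Module.natCard_eq_pow_finrank (K := F), Nat.card_eq_fintype_card, ← pow_succ, hdim]

variable (E) in
/-- `∑ y, ν(y) = q^d |E| + q^(d-1) (|E|² - |E|)`, stated without subtraction or division. -/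
lemma card_mul_sum_dotCollisions :
    q * ∑ y, dotCollisions E y + q ^ Fintype.card ι * #E
      = q ^ (Fintype.card ι + 1) * #E + q ^ Fintype.card ι * #E ^ 2 := by
  set d := Fintype.card ι
  have hswap : ∑ y, dotCollisions E y = ∑ p ∈ E ×ˢ E, #{y | (p.1 - p.2) ⬝ᵥ y = 0} := by
    simp only [dotCollisions, card_filter, sub_dotProduct, sub_eq_zero]
    exact sum_comm
  have hpoint (z : ι → F) : q * #{y | z ⬝ᵥ y = 0} + (if z = 0 then q ^ d else 0)
      = (if z = 0 then q ^ (d + 1) else 0) + q ^ d := by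
    split_ifs with hz
    · simp [hz, d, pow_succ']
    · rw [mul_comm, card_filter_dotProduct_eq_zero_mul_card hz, add_zero, zero_add]
  have hsum := sum_congr rfl fun p (_ : p ∈ E ×ˢ E) => hpoint (p.1 - p.2)
  simp only [sum_add_distrib, ← mul_sum, sum_ite, sum_const_zero, sum_const, smul_eq_mul,
    sub_eq_zero, add_zero, card_product] at hsum
  rw [← diag_eq_filter, diag_card] at hsum
  rw [hswap]
  linarith

variable (E) in
def heavyDirections : Finset (ι → F) := {y | y ≠ 0 ∧ 2 * #E ^ 2 ≤ q * dotCollisions E y}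

lemma units_smul_mem_heavyDirections {y : ι → F} (hy : y ∈ heavyDirections E) (u : Fˣ) :
    u • y ∈ heavyDirections E := by
  simp only [heavyDirections, mem_filter, mem_univ, true_and] at hy ⊢
  exact ⟨(smul_ne_zero_iff_ne u).2 hy.1, (dotCollisions_units_smul E u y).symm ▸ hy.2⟩

variable (E) in
lemma card_mul_card_heavyDirections_add_le :
    #E * (#(heavyDirections E) + (q - 1)) ≤ q ^ Fintype.card ι * (q - 1) := by
  set d := Fintype.card ι
  set H := heavyDirections E
  have hq : 1 ≤ q := Fintype.card_pos
  have hpoint (y : ι → F) : #E ^ 2 + (if y ∈ H then #E ^ 2 else 0)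
      + (if y = 0 then (q - 1) * #E ^ 2 else 0) ≤ q * dotCollisions E y := by
    by_cases hy : y = 0
    · have h0 : (0 : ι → F) ∉ H := by simp [H, heavyDirections]
      rw [hy, if_neg h0, if_pos rfl, dotCollisions_zero, add_zero, ← one_add_mul,
        Nat.add_sub_cancel' hq]
    · have hcs : #E ^ 2 ≤ q * dotCollisions E y := by
        simpa using sq_card_le_card_mul_dotCollisions (s := univ) (y := y) fun _ _ => mem_univ _
      rw [if_neg hy, add_zero]
      split_ifs with hH
      · have := (mem_filter.1 hH).2.2
        omega
      · simpa using hcs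
  have hsum := sum_le_sum fun y (_ : y ∈ univ) => hpoint y
  rw [sum_add_distrib, sum_add_distrib, sum_const, sum_ite_mem, univ_inter, sum_const,
    sum_ite_eq', if_pos (mem_univ _), card_univ, ← mul_sum] at hsum
  simp only [Fintype.card_pi, prod_const, card_univ, smul_eq_mul] at hsum
  have htot := card_mul_sum_dotCollisions E
  rcases E.eq_empty_or_nonempty with hE | hE
  · simp [hE]
  refine Nat.le_of_mul_le_mul_left ?_ (card_pos.2 hE)
  have hpow : q ^ (d + 1) = q ^ d * (q - 1) + q ^ d := by
    rw [pow_succ, ← mul_add_one, Nat.sub_add_cancel hq]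
  rw [hpow] at htot
  nlinarith

lemma card_mul_le_card_heavyDirections_mul {P : Finset (ι → F)} (hPE : P ⊆ E)
    (hPH : P ⊆ heavyDirections E) (hpoor : ∀ y ∈ P, 2 * #(E ∩ nonzeroMultiples y) ≤ q) :
    #P * (q - 1) ≤ #(heavyDirections E) * (q / 2) := by
  refine card_mul_le_card_mul (fun y z => z ∈ nonzeroMultiples y) (fun y hy => ?_) fun z _ => ?_
  · have hy0 : y ≠ 0 := (mem_filter.1 (hPH hy)).2.1
    rw [← card_nonzeroMultiples hy0]
    refine card_le_card fun z hz => (mem_bipartiteAbove _).2 ⟨?_, hz⟩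
    obtain ⟨u, rfl⟩ := mem_nonzeroMultiples.1 hz
    exact units_smul_mem_heavyDirections (hPH hy) u
  · rcases (P.bipartiteBelow (fun y z => z ∈ nonzeroMultiples y) z).eq_empty_or_nonempty
      with hemp | ⟨y₀, hy₀⟩
    · simp [hemp]
    rw [mem_bipartiteBelow] at hy₀
    obtain ⟨u₀, rfl⟩ := mem_nonzeroMultiples.1 hy₀.2
    refine (card_le_card fun y hy => ?_).trans
      ((Nat.le_div_iff_mul_le two_pos).2 (by linarith [hpoor y₀ hy₀.1]))
    rw [mem_bipartiteBelow] at hy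
    obtain ⟨u, hu⟩ := mem_nonzeroMultiples.1 hy.2
    refine mem_inter.2 ⟨hPE hy.1, mem_nonzeroMultiples.2 ⟨u⁻¹ * u₀, ?_⟩⟩
    rw [mul_smul, ← hu, inv_smul_smul]

lemma mul_card_heavyDirections_add_le_of_pow_succ_le (hE : q ^ (Fintype.card ι + 1) ≤ #E ^ 2) :
    q * (#(heavyDirections E) + (q - 1)) ≤ (q - 1) * #E := by
  have hE0 : 0 < #E := by
    have : 0 < #E ^ 2 := (pow_pos Fintype.card_pos _).trans_le hE
    exact Nat.pos_of_ne_zero fun h => by simp [h] at this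
  refine Nat.le_of_mul_le_mul_left ?_ hE0
  calc #E * (q * (#(heavyDirections E) + (q - 1)))
      = q * (#E * (#(heavyDirections E) + (q - 1))) := by ring
    _ ≤ q * (q ^ Fintype.card ι * (q - 1)) :=
      Nat.mul_le_mul_left _ (card_mul_card_heavyDirections_add_le E)
    _ = q ^ (Fintype.card ι + 1) * (q - 1) := by ring
    _ ≤ #E ^ 2 * (q - 1) := Nat.mul_le_mul_right _ hE
    _ = #E * ((q - 1) * #E) := by ring

lemma card_mul_card_badPins_le (hE : q ^ (Fintype.card ι + 1) ≤ #E ^ 2) :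
    q * #(badPins E) ≤ (q - 1) * #E := by
  have hq : 1 < q := Fintype.one_lt_card
  have hsub : badPins E ⊆ insert 0 (heavyDirections E) := by
    intro y hy
    rcases eq_or_ne y 0 with rfl | hy0
    · exact mem_insert_self _ _
    · refine mem_insert_of_mem (mem_filter.2 ⟨mem_univ _, hy0, ?_⟩)
      exact two_mul_sq_card_le_of_two_mul_card_image_le (mem_filter.1 hy).2
  have hcard := (card_le_card hsub).trans (card_insert_le _ _)
  calc q * #(badPins E) ≤ q * (#(heavyDirections E) + (q - 1)) :=
        Nat.mul_le_mul_left _ (by omega)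
    _ ≤ (q - 1) * #E := mul_card_heavyDirections_add_le_of_pow_succ_le hE

lemma four_mul_card_badPins_le (hE : q ^ (Fintype.card ι + 1) ≤ #E ^ 2) (hq : 16 ≤ q) :
    4 * #(badPins E) ≤ 3 * #E := by
  set P := {y ∈ badPins E | y ≠ 0 ∧ 2 * #(E ∩ nonzeroMultiples y) ≤ q}
  set R := {y ∈ badPins E | q < 2 * #(E ∩ nonzeroMultiples y)}
  have hsplit : #(badPins E) ≤ 1 + #P + #R := by
    have hsub : badPins E ⊆ insert 0 (P ∪ R) := by
      intro y hy
      rcases eq_or_ne y 0 with rfl | hy0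
      · exact mem_insert_self _ _
      refine mem_insert_of_mem ?_
      rcases le_or_gt (2 * #(E ∩ nonzeroMultiples y)) q with hpoor | hrich
      · exact mem_union_left _ (mem_filter.2 ⟨hy, hy0, hpoor⟩)
      · exact mem_union_right _ (mem_filter.2 ⟨hy, hrich⟩)
    have := (card_le_card hsub).trans ((card_insert_le _ _).trans
      (Nat.add_le_add_right (card_union_le P R) 1))
    omega
  have hP : 2 * #P + q ≤ #E := by
    have hPE : P ⊆ E := fun y hy => (mem_filter.1 (mem_filter.1 hy).1).1
    have hPH : P ⊆ heavyDirections E := fun y hy =>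
      mem_filter.2 ⟨mem_univ _, (mem_filter.1 hy).2.1,
        two_mul_sq_card_le_of_two_mul_card_image_le (mem_filter.1 (mem_filter.1 hy).1).2⟩
    have hcount := card_mul_le_card_heavyDirections_mul hPE hPH fun y hy => (mem_filter.1 hy).2.2
    have hheavy := mul_card_heavyDirections_add_le_of_pow_succ_le hE
    have hhalf : 2 * (q / 2) ≤ q := Nat.mul_div_le q 2
    refine Nat.le_of_mul_le_mul_left ?_ (by omega : 0 < q - 1)
    nlinarith
  have hR : 4 * #R ≤ #E := by
    have hiso := card_sq_le_of_isotropic (S := R) fun x hx y hy =>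
      dotProduct_eq_zero_of_mem_badPins (mem_filter.1 hy).1 (mem_filter.1 hx).2
    have : (4 * #R) ^ 2 ≤ #E ^ 2 := by
      calc (4 * #R) ^ 2 = 16 * #R ^ 2 := by ring
        _ ≤ q * q ^ Fintype.card ι := Nat.mul_le_mul hq hiso
        _ = q ^ (Fintype.card ι + 1) := by ring
        _ ≤ #E ^ 2 := hE
    exact (Nat.pow_le_pow_iff_left two_ne_zero).1 this
  have hq2 : 2 ≤ q := by omega
  omega

lemma card_le_sixteen_mul_card_filter (hE : q ^ (Fintype.card ι + 1) ≤ #E ^ 2) :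
    #E ≤ 16 * #{y ∈ E | q < 2 * #(E.image (· ⬝ᵥ y))} := by
  have hsplit : #{y ∈ E | q < 2 * #(E.image (· ⬝ᵥ y))} + #(badPins E) = #E := by
    simp only [badPins, ← not_lt]
    exact card_filter_add_card_filter_not _
  rcases le_or_gt q 16 with hq | hq
  · have := card_mul_card_badPins_le hE
    have hq1 : 1 ≤ q := Fintype.card_pos
    zify [hq1] at this hsplit ⊢
    nlinarith
  · have := four_mul_card_badPins_le hE hq.le
    omega

end

lemma pow_succ_le_sq_of_rpow_le {q d n : ℕ} (h : (q : ℝ) ^ (((d : ℝ) + 1) / 2) ≤ n) :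
    q ^ (d + 1) ≤ n ^ 2 := by
  have hq : (0 : ℝ) ≤ q := Nat.cast_nonneg q
  have hsq := pow_le_pow_left₀ (Real.rpow_nonneg hq _) h 2
  rw [← Real.rpow_mul_natCast hq, Nat.cast_two, div_mul_cancel₀ _ two_ne_zero,
    ← Nat.cast_succ, Real.rpow_natCast] at hsq
  exact_mod_cast hsq

/-- Pinned dot products: there is an absolute constant `c > 0` such that for every
finite field `𝔽_q`, every `d` and every `E ⊆ 𝔽_q^d` with `|E| ≥ q^{(d+1)/2}`,
there is `E' ⊆ E` with `|E'| ≥ c|E|` such that `|Π_y(E)| > q/2` for all `y ∈ E'`. -/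
theorem stmt_4 :
    ∃ c : ℝ, 0 < c ∧
      ∀ (F : Type) [Field F] [Fintype F] [DecidableEq F],
        ∀ (d : ℕ) (E : Finset (Fin d → F)),
          (E.card : ℝ) ≥ (Fintype.card F : ℝ) ^ (((d : ℝ) + 1) / 2) →
          ∃ E' ⊆ E, c * (E.card : ℝ) ≤ (E'.card : ℝ) ∧
            ∀ y ∈ E',
              (((E.image (fun x : Fin d → F => ∑ i, x i * y i)).card : ℝ)
                > (Fintype.card F : ℝ) / 2) := by
  refine ⟨1 / 16, by norm_num, fun F _ _ _ d E hE => ?_⟩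
  have hcard : Fintype.card F ^ (Fintype.card (Fin d) + 1) ≤ #E ^ 2 := by
    simpa using pow_succ_le_sq_of_rpow_le hE
  refine ⟨{y ∈ E | Fintype.card F < 2 * #(E.image (· ⬝ᵥ y))}, filter_subset _ E, ?_,
    fun y hy => ?_⟩
  · have : (#E : ℝ) ≤ 16 * #{y ∈ E | Fintype.card F < 2 * #(E.image (· ⬝ᵥ y))} := by
      exact_mod_cast card_le_sixteen_mul_card_filter hcard
    linarith
  · have : (Fintype.card F : ℝ) < 2 * #(E.image (· ⬝ᵥ y)) := by
      exact_mod_cast (mem_filter.1 hy).2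
    show (Fintype.card F : ℝ) / 2 < #(E.image (· ⬝ᵥ y))
    linarith
end

section
/- Let $\mathbb{F}_q$ have odd characteristic and let $S_t = \{x \in \mathbb{F}_q^d : x_1^2 + \cdots + x_d^2 = t\}$. Then $\sum_{t \in \mathbb{F}_q} |S_t|^2 = q^{2d-1} + q^d - q^{d-1}$. -/
/-!
Summing `|S_t|²` over `t` counts the pairs `(x, y)` with `x ⬝ x = y ⬝ y`. As `2` is invertible,
`(x, y) ↦ (x + y, x - y)` is a bijection, and `(x + y) ⬝ (x - y) = x ⬝ x - y ⬝ y`, so these pairs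
correspond to the orthogonal pairs `(u, v)`. For `u = 0` every `v` is orthogonal to `u`; for
`u ≠ 0` the orthogonal `v` form the kernel of a nonzero linear functional, of size `q^(d-1)`.
Hence the count is `q^d + (q^d - 1) q^(d-1) = q^(2d-1) + q^d - q^(d-1)`.
-/

open Finset

theorem Finset.sum_card_fiber_sq {α β : Type*} [Fintype α] [Fintype β] [DecidableEq β]
    (f : α → β) :
    ∑ t, #{x | f x = t} ^ 2 = #{p : α × α | f p.1 = f p.2} := by
  rw [card_eq_sum_card_fiberwise (f := fun p => f p.1) (t := univ) fun _ _ => mem_univ _]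
  refine sum_congr rfl fun t _ => ?_
  rw [sq, ← card_product, filter_filter]
  congr 1
  ext p
  simp only [mem_product, mem_filter, mem_univ, true_and]
  constructor
  · rintro ⟨h1, h2⟩; exact ⟨h1.trans h2.symm, h1⟩
  · rintro ⟨h1, h2⟩; exact ⟨h2, h1 ▸ h2⟩

def addSubEquiv (R : Type*) {V : Type*} [Ring R] [Invertible (2 : R)] [AddCommGroup V]
    [Module R V] : V × V ≃ V × V where
  toFun p := (p.1 + p.2, p.1 - p.2)
  invFun p := ((⅟2 : R) • (p.1 + p.2), (⅟2 : R) • (p.1 - p.2))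
  left_inv p := by
    ext <;> dsimp only
    · rw [add_add_sub_cancel, smul_add, invOf_two_smul_add_invOf_two_smul]
    · rw [add_sub_sub_cancel, smul_add, invOf_two_smul_add_invOf_two_smul]
  right_inv p := by
    ext <;> dsimp only
    · rw [← smul_add, add_add_sub_cancel, smul_add, invOf_two_smul_add_invOf_two_smul]
    · rw [← smul_sub, add_sub_sub_cancel, smul_add, invOf_two_smul_add_invOf_two_smul]

theorem Module.Dual.natCard_ker_of_ne_zero {K V : Type*} [Field K] [AddCommGroup V] [Module K V]
    [Module.Finite K V] {f : Module.Dual K V} (hf : f ≠ 0) :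
    Nat.card (LinearMap.ker f) = Nat.card K ^ (Module.finrank K V - 1) := by
  rw [Module.natCard_eq_pow_finrank (K := K), ← f.finrank_ker_add_one_of_ne_zero hf,
    Nat.add_sub_cancel]

section DotProduct

variable {F ι : Type*} [Field F] [Fintype F] [DecidableEq F] [Fintype ι] [DecidableEq ι]

theorem card_pairs_dotProduct_self_eq (h2 : (2 : F) ≠ 0) :
    #{p : (ι → F) × (ι → F) | p.1 ⬝ᵥ p.1 = p.2 ⬝ᵥ p.2}
      = #{p : (ι → F) × (ι → F) | p.1 ⬝ᵥ p.2 = 0} := by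
  let := invertibleOfNonzero h2
  refine card_equiv (addSubEquiv F) fun p => ?_
  simp only [mem_filter, mem_univ, true_and, addSubEquiv, Equiv.coe_fn_mk, add_dotProduct,
    dotProduct_sub, dotProduct_comm p.2 p.1]
  constructor <;> intro h <;> linear_combination h

theorem card_dotProduct_eq_zero {u : ι → F} (hu : u ≠ 0) :
    #{v | u ⬝ᵥ v = 0} = Fintype.card F ^ (Fintype.card ι - 1) := by
  have hf : dotProductEquiv F ι u ≠ 0 := (LinearEquiv.map_ne_zero_iff _).2 hu
  calc #{v | u ⬝ᵥ v = 0} = Nat.card (LinearMap.ker (dotProductEquiv F ι u)) := by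
        rw [← Fintype.card_subtype, ← Nat.card_eq_fintype_card]
        exact Nat.card_congr (Equiv.subtypeEquivRight fun v => by simp)
    _ = Fintype.card F ^ (Fintype.card ι - 1) := by
        rw [Module.Dual.natCard_ker_of_ne_zero hf, Nat.card_eq_fintype_card,
          Module.finrank_fintype_fun_eq_card]

theorem card_pairs_dotProduct_eq_zero :
    #{p : (ι → F) × (ι → F) | p.1 ⬝ᵥ p.2 = 0}
      = Fintype.card F ^ Fintype.card ι
        + (Fintype.card F ^ Fintype.card ι - 1) * Fintype.card F ^ (Fintype.card ι - 1) := by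
  rw [← univ_product_univ, card_filter, sum_product, ← add_sum_erase _ _ (mem_univ 0)]
  simp only [← card_filter, zero_dotProduct, filter_true, card_univ, Fintype.card_fun]
  rw [sum_congr rfl fun u hu => card_dotProduct_eq_zero (ne_of_mem_erase hu), sum_const,
    card_erase_of_mem (mem_univ _), card_univ, Fintype.card_fun, smul_eq_mul]

theorem sum_card_dotProduct_self_eq_sq (h2 : (2 : F) ≠ 0) :
    ∑ t, #{x : ι → F | x ⬝ᵥ x = t} ^ 2
      = Fintype.card F ^ Fintype.card ι
        + (Fintype.card F ^ Fintype.card ι - 1) * Fintype.card F ^ (Fintype.card ι - 1) := by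
  rw [sum_card_fiber_sq, card_pairs_dotProduct_self_eq h2, card_pairs_dotProduct_eq_zero]

end DotProduct

theorem stmt_14_general (F : Type) [Field F] [Fintype F] [DecidableEq F]
    (hchar : ringChar F ≠ 2) (d : ℕ) :
    ∑ t : F, ((Finset.univ.filter (fun x : Fin d → F => ∑ i, x i ^ 2 = t)).card : ℝ) ^ 2
      = (Fintype.card F : ℝ) ^ (2 * d - 1) + (Fintype.card F : ℝ) ^ d
        - (Fintype.card F : ℝ) ^ (d - 1) := by
  have hsq (x : Fin d → F) : ∑ i, x i ^ 2 = x ⬝ᵥ x := by simp only [dotProduct, sq]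
  have hcount := congrArg (Nat.cast : ℕ → ℝ)
    (sum_card_dotProduct_self_eq_sq (ι := Fin d) (Ring.two_ne_zero hchar))
  have hpow : 1 ≤ Fintype.card F ^ d := Nat.one_le_pow _ _ Fintype.card_pos
  push_cast [Nat.cast_sub hpow, Fintype.card_fin] at hcount
  simp only [hsq]
  rw [hcount, show 2 * d - 1 = d + (d - 1) by omega, pow_add]
  ring

/-- `∑_t |S_t|² = q^{2d-1} + q^d - q^{d-1}` for spheres in `𝔽_q^d`, `q` odd. -/
theorem stmt_14 (F : Type) [Field F] [Fintype F] [DecidableEq F]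
    (hchar : ringChar F ≠ 2) (d : ℕ) (hd : 1 ≤ d) :
    ∑ t : F, ((Finset.univ.filter (fun x : Fin d → F => ∑ i, x i ^ 2 = t)).card : ℝ) ^ 2
      = (Fintype.card F : ℝ) ^ (2 * d - 1) + (Fintype.card F : ℝ) ^ d
        - (Fintype.card F : ℝ) ^ (d - 1) :=
  stmt_14_general F hchar d
end

section
/- Let $E \subseteq \mathbb{F}_q^d$ and for $y^1,\ldots,y^k \in E$, $s_1,\ldots,s_k \in \mathbb{F}_q$ define $\eta_{y^1,\ldots,y^k}(s_1,\ldots,s_k) = |\{x \in E : x \cdot y^j = s_j \text{ for } j=1,\ldots,k\}|$. Then $\sum_{y^1,\ldots,y^k \in E}\sum_{s_1,\ldots,s_k \in \mathbb{F}_q} \eta_{y^1,\ldots,y^k}(s_1,\ldots,s_k)^2 \lesssim q^{-k}|E|^{k+2} + q^d|E|^k$. -/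
/-!
Expanding the square, the left-hand side is `∑_{x, x' ∈ E} ν(x - x')^k` with
`ν(z) = #{y ∈ E | z ⬝ᵥ y = 0}`. Write `q ν(z) = |E| + R(z)`. For a primitive additive
character `ψ`, `R(z) = ∑_{t ≠ 0, y ∈ E} ψ(z ⬝ᵥ t y)`, so Plancherel gives
`∑_z R(z)² ≤ q^{d+2} |E|` (each vector is `t y` for at most `q` pairs), while
`∑_{x, x' ∈ E} R(x - x') = ∑_{t ≠ 0, y ∈ E} |Ê(t y)|² ≤ q^{d+1} |E|` with
`Ê(w) = ∑_{x ∈ E} ψ(w ⬝ᵥ x)`. Since `|R| ≤ q |E|`, for `k ≥ 2` we have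
`(q ν)^k ≲ |E|^k + (q |E|)^{k-2} R²`, and summing over `x, x'` gives the bound; for `k = 1`
the sum of `R` is used directly.
-/

open Finset

lemma Finset.sum_comp_le_mul_sum {α β : Type*} [Fintype β] [DecidableEq β] {s : Finset α}
    {g : α → β} {m : ℕ} (hg : ∀ b, #{a ∈ s | g a = b} ≤ m) {f : β → ℝ}
    (hf : ∀ b, 0 ≤ f b) :
    ∑ a ∈ s, f (g a) ≤ m * ∑ b, f b := by
  rw [sum_comp, mul_sum]
  calc ∑ b ∈ s.image g, #{a ∈ s | g a = b} • f b ≤ ∑ b ∈ s.image g, m * f b :=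
        sum_le_sum fun b _ => by rw [nsmul_eq_mul]; gcongr; exacts [hf b, hg b]
    _ ≤ ∑ b, m * f b := sum_le_univ_sum_of_nonneg fun b => mul_nonneg m.cast_nonneg (hf b)

lemma Finset.card_filter_comp_eq_le {α β : Type*} [DecidableEq β] {s : Finset α} {g : α → β}
    {m : ℕ} (hg : ∀ b, #{a ∈ s | g a = b} ≤ m) :
    #{p ∈ s ×ˢ s | g p.1 = g p.2} ≤ m * #s := by
  rw [card_filter, sum_product, mul_comm, ← smul_eq_mul, ← sum_const]
  refine sum_le_sum fun a _ => ?_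
  simpa only [← card_filter, eq_comm] using hg (g a)

lemma Finset.sum_sq_card_filter_eq {α β : Type*} [Fintype β] [DecidableEq β] (s : Finset α)
    (f : α → β) : ∑ b, #{a ∈ s | f a = b} ^ 2 = #{p ∈ s ×ˢ s | f p.1 = f p.2} := by
  rw [card_eq_sum_card_fiberwise (f := fun p => f p.1) (t := univ) fun _ _ => mem_univ _]
  refine sum_congr rfl fun b _ => ?_
  rw [sq, ← card_product, filter_filter]
  congr 1
  ext ⟨a, a'⟩
  simp only [mem_product, mem_filter]
  constructor
  · rintro ⟨⟨ha, hb⟩, ⟨ha', hb'⟩⟩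
    exact ⟨⟨ha, ha'⟩, hb.trans hb'.symm, hb⟩
  · rintro ⟨⟨ha, ha'⟩, hab, hb⟩
    exact ⟨⟨ha, hb⟩, ha', hab.symm.trans hb⟩

-- The decidability instance of the `∀` is a binder so that the lemma also matches
-- `Nat.decidableForallFin`, which is what `∀ j : Fin k` elaborates to.
lemma Fintype.filter_piFinset_const_forall {κ α : Type*} [DecidableEq κ] [Fintype κ]
    (s : Finset α) (p : α → Prop) [DecidablePred p]
    [DecidablePred fun y : κ → α => ∀ j, p (y j)] :
    {y ∈ piFinset fun _ : κ => s | ∀ j, p (y j)} = piFinset fun _ => {a ∈ s | p a} := by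
  ext y
  simp [forall_and]

lemma Finset.sum_sum_sub_le_card_mul_sum {G : Type*} [AddGroup G] [Fintype G] (E : Finset G)
    {f : G → ℝ} (hf : ∀ z, 0 ≤ f z) :
    ∑ x ∈ E, ∑ x' ∈ E, f (x - x') ≤ #E * ∑ z, f z := by
  rw [← nsmul_eq_mul, ← sum_const]
  gcongr with x
  calc ∑ x' ∈ E, f (x - x') ≤ ∑ x', f (x - x') := sum_le_univ_sum_of_nonneg fun _ => hf _
    _ = ∑ z, f z := (Equiv.subLeft x).sum_comp f

lemma pow_add_two_le_of_abs_sub_le {a e M : ℝ} (ha : 0 ≤ a) (he : 0 ≤ e) (hM : |a - e| ≤ M)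
    (m : ℕ) : a ^ (m + 2) ≤ 2 ^ (m + 1) * (e ^ (m + 2) + M ^ m * (a - e) ^ 2) := by
  have hpow : |a - e| ^ (m + 2) ≤ M ^ m * (a - e) ^ 2 := by
    rw [pow_add, sq_abs]
    gcongr
  calc a ^ (m + 2) ≤ (e + |a - e|) ^ (m + 2) := by
        gcongr
        linarith [le_abs_self (a - e)]
    _ ≤ 2 ^ (m + 1) * (e ^ (m + 2) + |a - e| ^ (m + 2)) := add_pow_le he (abs_nonneg _) _
    _ ≤ 2 ^ (m + 1) * (e ^ (m + 2) + M ^ m * (a - e) ^ 2) := by gcongr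

section MomentBounds

variable {G : Type*} [AddGroup G] (E : Finset G) {n : G → ℝ} {Q D : ℝ}

lemma sum_sum_le_of_sum_sum_sub_le (hQ : 0 < Q)
    (h1 : ∑ x ∈ E, ∑ x' ∈ E, (Q * n (x - x') - #E) ≤ D * Q * #E) :
    ∑ x ∈ E, ∑ x' ∈ E, n (x - x') ≤ Q⁻¹ * #E ^ 3 + D * #E := by
  have hsum : ∑ x ∈ E, ∑ x' ∈ E, (Q * n (x - x') - #E)
      = Q * ∑ x ∈ E, ∑ x' ∈ E, n (x - x') - #E ^ 3 := by
    simp only [sum_sub_distrib, ← mul_sum, sum_const, nsmul_eq_mul]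
    ring
  rw [hsum] at h1
  rw [inv_mul_eq_div, ← sub_le_iff_le_add, le_div_iff₀ hQ]
  nlinarith

lemma sum_sum_pow_add_two_le_of_sum_sq_sub_le [Fintype G] (hQ : 1 ≤ Q) (hn : ∀ z, 0 ≤ n z)
    (hnE : ∀ z, n z ≤ #E) (h2 : ∑ z, (Q * n z - #E) ^ 2 ≤ D * Q ^ 2 * #E) (m : ℕ) :
    ∑ x ∈ E, ∑ x' ∈ E, n (x - x') ^ (m + 2)
      ≤ 2 ^ (m + 1) * (Q⁻¹ ^ (m + 2) * #E ^ (m + 4) + D * #E ^ (m + 2)) := by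
  set e : ℝ := (#E : ℝ)
  have hQ0 : 0 < Q := one_pos.trans_le hQ
  have he : 0 ≤ e := Nat.cast_nonneg _
  have hdev : ∀ z, |Q * n z - e| ≤ Q * e := fun z => by
    have hnQ := mul_le_mul_of_nonneg_left (hnE z) hQ0.le
    rw [abs_le]
    have hQe : e ≤ Q * e := le_mul_of_one_le_left he hQ
    have hQn : 0 ≤ Q * n z := mul_nonneg hQ0.le (hn z)
    constructor <;> linarith
  have hpoint : ∀ z,
      (Q * n z) ^ (m + 2) ≤ 2 ^ (m + 1) * (e ^ (m + 2) + (Q * e) ^ m * (Q * n z - e) ^ 2) :=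
    fun z => pow_add_two_le_of_abs_sub_le (mul_nonneg hQ0.le (hn z)) he (hdev z) m
  have hsq : ∑ x ∈ E, ∑ x' ∈ E, (Q * n (x - x') - e) ^ 2 ≤ e * (D * Q ^ 2 * e) :=
    (sum_sum_sub_le_card_mul_sum E (f := fun z => (Q * n z - e) ^ 2) fun _ => sq_nonneg _).trans
      (mul_le_mul_of_nonneg_left h2 he)
  have hscaled : Q ^ (m + 2) * ∑ x ∈ E, ∑ x' ∈ E, n (x - x') ^ (m + 2)
      ≤ 2 ^ (m + 1) * (e ^ (m + 4) + D * Q ^ (m + 2) * e ^ (m + 2)) := by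
    calc Q ^ (m + 2) * ∑ x ∈ E, ∑ x' ∈ E, n (x - x') ^ (m + 2)
        = ∑ x ∈ E, ∑ x' ∈ E, (Q * n (x - x')) ^ (m + 2) := by simp only [mul_sum, mul_pow]
      _ ≤ ∑ x ∈ E, ∑ x' ∈ E,
            2 ^ (m + 1) * (e ^ (m + 2) + (Q * e) ^ m * (Q * n (x - x') - e) ^ 2) := by
          gcongr with x _ x' _; exact hpoint _
      _ = 2 ^ (m + 1) *
            (e ^ (m + 4) + (Q * e) ^ m * ∑ x ∈ E, ∑ x' ∈ E, (Q * n (x - x') - e) ^ 2) := by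
          simp only [← mul_sum, sum_add_distrib, sum_const, nsmul_eq_mul]; ring
      _ ≤ 2 ^ (m + 1) * (e ^ (m + 4) + (Q * e) ^ m * (e * (D * Q ^ 2 * e))) := by gcongr
      _ = _ := by ring
  have hQk : Q⁻¹ ^ (m + 2) * Q ^ (m + 2) = 1 := by
    rw [← mul_pow, inv_mul_cancel₀ hQ0.ne', one_pow]
  calc ∑ x ∈ E, ∑ x' ∈ E, n (x - x') ^ (m + 2)
      = Q⁻¹ ^ (m + 2) * (Q ^ (m + 2) * ∑ x ∈ E, ∑ x' ∈ E, n (x - x') ^ (m + 2)) := by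
        rw [← mul_assoc, hQk, one_mul]
    _ ≤ Q⁻¹ ^ (m + 2) * (2 ^ (m + 1) * (e ^ (m + 4) + D * Q ^ (m + 2) * e ^ (m + 2))) := by
        gcongr
    _ = _ := by linear_combination (2 ^ (m + 1) * D * e ^ (m + 2)) * hQk

theorem sum_sum_pow_le_of_moment_bounds [Fintype G] (hQ : 1 ≤ Q) (hD : 0 ≤ D)
    (hn : ∀ z, 0 ≤ n z) (hnE : ∀ z, n z ≤ #E)
    (h1 : ∑ x ∈ E, ∑ x' ∈ E, (Q * n (x - x') - #E) ≤ D * Q * #E)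
    (h2 : ∑ z, (Q * n z - #E) ^ 2 ≤ D * Q ^ 2 * #E) (k : ℕ) :
    ∑ x ∈ E, ∑ x' ∈ E, n (x - x') ^ k ≤ 2 ^ k * (Q⁻¹ ^ k * #E ^ (k + 2) + D * #E ^ k) := by
  have he : (0 : ℝ) ≤ #E := Nat.cast_nonneg _
  match k with
  | 0 =>
    simp only [pow_zero, sum_const, nsmul_eq_mul, mul_one, one_mul, zero_add]
    nlinarith
  | 1 =>
    have hsum := sum_sum_le_of_sum_sum_sub_le E (one_pos.trans_le hQ) h1
    have hX : 0 ≤ Q⁻¹ * #E ^ 3 + D * #E := by positivity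
    simp only [pow_one]
    linarith
  | m + 2 =>
    rw [show m + 2 + 2 = m + 4 by ring, pow_succ 2 (m + 1)]
    have hX : 0 ≤ Q⁻¹ ^ (m + 2) * (#E : ℝ) ^ (m + 4) + D * #E ^ (m + 2) := by positivity
    calc _ ≤ _ := sum_sum_pow_add_two_le_of_sum_sq_sub_le E hQ hn hnE h2 m
      _ ≤ _ := by nlinarith [pow_pos (two_pos : (0 : ℝ) < 2) (m + 1)]

end MomentBounds

section DotProduct

open Complex Fintype

variable {F ι : Type*} [Field F] [Fintype F] [Fintype ι]

lemma AddChar.normSq_sum_apply_dotProduct {α : Type*} (ψ : AddChar F ℂ) (P : Finset α)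
    (g : α → ι → F) (z : ι → F) :
    (normSq (∑ p ∈ P, ψ (z ⬝ᵥ g p)) : ℂ) = ∑ p ∈ P, ∑ p' ∈ P, ψ (z ⬝ᵥ (g p - g p')) := by
  rw [← mul_conj, map_sum, Finset.sum_mul_sum]
  simp_rw [← AddChar.map_neg_eq_conj, ← AddChar.map_add_eq_mul, dotProduct_sub, sub_eq_add_neg]

variable [DecidableEq F]

def orthogonalCount (E : Finset (ι → F)) (z : ι → F) : ℕ := #{y ∈ E | z ⬝ᵥ y = 0}

lemma AddChar.IsPrimitive.card_mul_orthogonalCount_sub_card {ψ : AddChar F ℂ}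
    (hψ : ψ.IsPrimitive) (E : Finset (ι → F)) (z : ι → F) :
    (card F : ℂ) * orthogonalCount E z - #E
      = ∑ p ∈ (univ.erase (0 : F)) ×ˢ E, ψ (z ⬝ᵥ p.1 • p.2) := by
  have hfiber : ∀ a : F,
      ∑ t ∈ univ.erase 0, ψ (t * a) = (if a = 0 then (card F : ℂ) else 0) - 1 := fun a => by
    rw [sum_erase_eq_sub (mem_univ 0), AddChar.sum_mulShift _ hψ]
    simp
  simp_rw [sum_product_right, dotProduct_smul, smul_eq_mul, hfiber, sum_sub_distrib, ← sum_filter,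
    sum_const, nsmul_eq_mul, mul_one, orthogonalCount, mul_comm]

lemma card_filter_smul_eq_le (E : Finset (ι → F)) (w : ι → F) :
    #{p ∈ (univ.erase (0 : F)) ×ˢ E | p.1 • p.2 = w} ≤ card F := by
  refine card_le_card_of_injOn Prod.fst (fun _ _ => mem_coe.2 (mem_univ _)) ?_
  rintro ⟨t, y⟩ hp ⟨t', y'⟩ hp' (rfl : t = t')
  simp only [coe_filter, mem_product, mem_erase, Set.mem_ofPred_eq] at hp hp'
  exact Prod.ext rfl (smul_right_injective _ hp.1.1.1 (hp.2.trans hp'.2.symm))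

theorem sum_sum_sq_card_filter_dotProduct_eq (k : ℕ) (E : Finset (ι → F)) :
    ∑ y ∈ piFinset fun _ : Fin k => E, ∑ s : Fin k → F, #{x ∈ E | ∀ j, x ⬝ᵥ y j = s j} ^ 2
      = ∑ x ∈ E, ∑ x' ∈ E, orthogonalCount E (x - x') ^ k := by
  have hsq : ∀ y : Fin k → ι → F, ∑ s : Fin k → F, #{x ∈ E | ∀ j, x ⬝ᵥ y j = s j} ^ 2
      = #{p ∈ E ×ˢ E | ∀ j, p.1 ⬝ᵥ y j = p.2 ⬝ᵥ y j} := fun y => by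
    simpa only [funext_iff] using sum_sq_card_filter_eq E fun x j => x ⬝ᵥ y j
  have hfiber : ∀ x x' : ι → F,
      #{y ∈ piFinset fun _ : Fin k => E | ∀ j, x ⬝ᵥ y j = x' ⬝ᵥ y j}
        = orthogonalCount E (x - x') ^ k := fun x x' => by
    simp_rw [← sub_eq_zero (a := x ⬝ᵥ _), ← sub_dotProduct]
    rw [filter_piFinset_const_forall E fun u => (x - x') ⬝ᵥ u = 0, card_piFinset, prod_const,
      card_univ, Fintype.card_fin, orthogonalCount]
  simp_rw [hsq, card_filter, sum_product]
  rw [sum_comm]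
  refine sum_congr rfl fun x _ => ?_
  rw [sum_comm]
  simp_rw [← card_filter, hfiber]

variable [DecidableEq ι]

lemma AddChar.IsPrimitive.sum_apply_dotProduct {ψ : AddChar F ℂ} (hψ : ψ.IsPrimitive)
    (a : ι → F) :
    ∑ z : ι → F, ψ (z ⬝ᵥ a) = if a = 0 then (card F : ℂ) ^ card ι else 0 := by
  simp_rw [dotProduct, AddChar.map_sum_eq_prod]
  rw [← Fintype.prod_sum (fun i t => ψ (t * a i))]
  simp_rw [AddChar.sum_mulShift _ hψ, Nat.cast_ite, Nat.cast_zero, Fintype.prod_ite_zero,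
    prod_const, card_univ, ← funext_iff, Pi.zero_def]

theorem AddChar.IsPrimitive.sum_normSq_sum_apply_dotProduct {α : Type*} {ψ : AddChar F ℂ}
    (hψ : ψ.IsPrimitive) (P : Finset α) (g : α → ι → F) :
    ∑ z, normSq (∑ p ∈ P, ψ (z ⬝ᵥ g p))
      = (card F : ℝ) ^ card ι * #{p ∈ P ×ˢ P | g p.1 = g p.2} := by
  apply ofReal_injective
  push_cast
  simp_rw [AddChar.normSq_sum_apply_dotProduct]
  rw [sum_comm]
  simp_rw [sum_comm (s := (univ : Finset (ι → F))), hψ.sum_apply_dotProduct, sub_eq_zero,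
    ← sum_product' (f := fun p p' => if g p = g p' then (card F : ℂ) ^ card ι else 0),
    ← sum_filter, sum_const, nsmul_eq_mul, mul_comm]

theorem sum_sq_card_mul_orthogonalCount_sub_card_le (E : Finset (ι → F)) :
    ∑ z, ((card F : ℝ) * orthogonalCount E z - #E) ^ 2
      ≤ (card F : ℝ) ^ card ι * card F ^ 2 * #E := by
  set ψ := AddChar.FiniteField.primitiveChar_to_Complex F
  have hψ : ψ.IsPrimitive := AddChar.FiniteField.primitiveChar_to_Complex_isPrimitive F
  set P := (univ.erase (0 : F)) ×ˢ E
  have hsq : ∀ z, ((card F : ℝ) * orthogonalCount E z - #E) ^ 2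
      = normSq (∑ p ∈ P, ψ (z ⬝ᵥ p.1 • p.2)) := fun z => by
    have hreal : (card F : ℂ) * orthogonalCount E z - #E
        = (((card F : ℝ) * orthogonalCount E z - #E : ℝ) : ℂ) := by push_cast; rfl
    rw [← hψ.card_mul_orthogonalCount_sub_card, hreal, normSq_ofReal, sq]
  have hP : #P ≤ card F * #E := by
    rw [card_product]
    gcongr
    exact (card_erase_le).trans card_univ.le
  have hcoll : #{p ∈ P ×ˢ P | p.1.1 • p.1.2 = p.2.1 • p.2.2} ≤ card F * (card F * #E) :=
    (card_filter_comp_eq_le (card_filter_smul_eq_le E)).trans (Nat.mul_le_mul_left _ hP)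
  simp_rw [hsq]
  rw [hψ.sum_normSq_sum_apply_dotProduct, mul_assoc, sq, mul_assoc]
  gcongr
  exact_mod_cast hcoll

theorem sum_sum_card_mul_orthogonalCount_sub_card_le (E : Finset (ι → F)) :
    ∑ x ∈ E, ∑ x' ∈ E, ((card F : ℝ) * orthogonalCount E (x - x') - #E)
      ≤ (card F : ℝ) ^ card ι * card F * #E := by
  set ψ := AddChar.FiniteField.primitiveChar_to_Complex F
  have hψ : ψ.IsPrimitive := AddChar.FiniteField.primitiveChar_to_Complex_isPrimitive F
  set S : (ι → F) → ℝ := fun w => normSq (∑ x ∈ E, ψ (w ⬝ᵥ x))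
  have hS : ∑ x ∈ E, ∑ x' ∈ E, ((card F : ℝ) * orthogonalCount E (x - x') - #E)
      = ∑ p ∈ (univ.erase (0 : F)) ×ˢ E, S (p.1 • p.2) := by
    apply ofReal_injective
    push_cast
    simp_rw [hψ.card_mul_orthogonalCount_sub_card, S, AddChar.normSq_sum_apply_dotProduct]
    conv_lhs => enter [2, x]; rw [sum_comm]
    rw [sum_comm]
    refine sum_congr rfl fun p _ => sum_congr rfl fun x _ => sum_congr rfl fun x' _ => ?_
    rw [dotProduct_comm]
  have hParseval : ∑ w, S w = (card F : ℝ) ^ card ι * #E := by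
    simp only [S]
    have := hψ.sum_normSq_sum_apply_dotProduct E id
    simp only [id] at this
    rw [this, ← diag_eq_filter, diag_card]
  calc _ = ∑ p ∈ (univ.erase (0 : F)) ×ˢ E, S (p.1 • p.2) := hS
    _ ≤ card F * ∑ w, S w :=
        sum_comp_le_mul_sum (card_filter_smul_eq_le E) fun w => normSq_nonneg _
    _ = _ := by rw [hParseval]; ring

end DotProduct

/-- `k`-star dot product counting: there is `C > 0` (depending only on `d, k`)
with `∑_{y¹,…,yᵏ ∈ E} ∑_{s₁,…,s_k} η_{y¹,…,yᵏ}(s₁,…,s_k)²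
≤ C (q^{-k}|E|^{k+2} + q^d|E|^k)`. -/
theorem stmt_19 (d k : ℕ) :
    ∃ C : ℝ, 0 < C ∧
      ∀ (F : Type) [Field F] [Fintype F] [DecidableEq F],
        ∀ E : Finset (Fin d → F),
          ∑ y ∈ Fintype.piFinset (fun _ : Fin k => E), ∑ s : Fin k → F,
              ((E.filter (fun x : Fin d → F =>
                  ∀ j, ∑ i, x i * y j i = s j)).card : ℝ) ^ 2
            ≤ C * ((Fintype.card F : ℝ)⁻¹ ^ k * (E.card : ℝ) ^ (k + 2)
                + (Fintype.card F : ℝ) ^ d * (E.card : ℝ) ^ k) := by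
  refine ⟨2 ^ k, by positivity, fun F _ _ _ E => ?_⟩
  have h1 := sum_sum_card_mul_orthogonalCount_sub_card_le E
  have h2 := sum_sq_card_mul_orthogonalCount_sub_card_le E
  rw [Fintype.card_fin] at h1 h2
  calc _ = ∑ x ∈ E, ∑ x' ∈ E, (orthogonalCount E (x - x') : ℝ) ^ k := by
        exact_mod_cast sum_sum_sq_card_filter_dotProduct_eq k E
    _ ≤ _ := sum_sum_pow_le_of_moment_bounds E (n := fun z => (orthogonalCount E z : ℝ))
        (Nat.one_le_cast.2 Fintype.card_pos) (by positivity) (fun _ => Nat.cast_nonneg _)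
        (fun _ => Nat.cast_le.2 (card_filter_le _ _)) h1 h2 k
end
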